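/- For all x ≥ 1, the following chain of step-downs with parameter x+2 holds: ω_{x+3} = ω^{ω_{x+2}} >_{x+2} ω^{ω_{x+1}+1} >_{x+2} ω^{ω_{x+1}}·3 >_{x+2} ω_{x+2}·2 + 1, where ω_n denotes the tower ω_0 = 1, ω_{n+1} = ω^{ω_n}. -/

import Mathlib

namespace SlowCon

open ONote

/-- Fast-growing hierarchy with `F_{α+1}(n) = F_α^[n+1](n)`, standard fundamental sequences. -/
def F : ONote → ℕ → ℕ
  | o =>
    match fundamentalSequence o, fundamentalSequence_has_prop o with
    | Sum.inl none, _ => fun n => n + 1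
    | Sum.inl (some a), h =>
      have : a < o := by rw [ONote.lt_def, h.1]; exact Order.lt_succ _
      fun n => (F a)^[n + 1] n
    | Sum.inr f, h => fun n =>
      have : f n < o := (h.2.1 n).2.1
      F (f n) n
  termination_by o => o

/-- The `k`-th member of the fundamental sequence (predecessor at successors, `0` at `0`). -/
def fs (o : ONote) (k : ℕ) : ONote :=
  match fundamentalSequence o with
  | Sum.inl none => 0
  | Sum.inl (some a) => a
  | Sum.inr f => f k

/-- `stepDown k a b` : one can descend from `b` to `a` via `k`-th members of
fundamental sequences (at least one step). -/
def stepDown (k : ℕ) (a b : ONote) : Prop :=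
  Relation.TransGen (fun x y => y ≠ 0 ∧ x = fs y k) a b

/-- Tower of ω's: `wtower 0 = 1`, `wtower (n+1) = ω ^ wtower n`. -/
def wtower : ℕ → ONote
  | 0 => 1
  | n + 1 => ONote.oadd (wtower n) 1 0

/-- `F_{ε₀}(n) := F_{ω_{n+1}}(n)`. -/
def Feps (n : ℕ) : ℕ := F (wtower (n + 1)) n

/-- Ordinals `≤ ε₀`: `none` stands for `ε₀`, `some a` for `a < ε₀`. -/
def fsE : Option ONote → ℕ → Option ONote
  | none, k => some (wtower (k + 1))
  | some a, k => some (fs a k)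

/-- Step-down relation on ordinals `≤ ε₀` (with `{ε₀}(k) = ω_{k+1}`). -/
def stepDownE (k : ℕ) (a b : Option ONote) : Prop :=
  Relation.TransGen (fun x y => y ≠ some 0 ∧ x = fsE y k) a b

/-- Fast-growing hierarchy at indices `≤ ε₀`. -/
def FE : Option ONote → ℕ → ℕ
  | none, n => Feps n
  | some a, n => F a n

/-- Normal form for indices `≤ ε₀`. -/
def NFE : Option ONote → Prop
  | none => True
  | some a => a.NF

end SlowCon

namespace SlowCon

open ONote

/-- `iterRel G j x y` : `y` is obtained from `x` by `j` applications of the graph `G`. -/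
def iterRel (G : ℕ → ℕ → Prop) : ℕ → ℕ → ℕ → Prop
  | 0, x, y => y = x
  | j + 1, x, y => ∃ z, iterRel G j x z ∧ G z y

/-- Graph relation of the fast-growing hierarchy: `FRel α x y` means `F_α(x) = y`. -/
def FRel : ONote → ℕ → ℕ → Prop
  | o =>
    match fundamentalSequence o, fundamentalSequence_has_prop o with
    | Sum.inl none, _ => fun x y => y = x + 1
    | Sum.inl (some a), h =>
      have : a < o := by rw [ONote.lt_def, h.1]; exact Order.lt_succ _
      fun x y => iterRel (FRel a) (x + 1) x y
    | Sum.inr f, h => fun x y =>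
      have : f x < o := (h.2.1 x).2.1
      FRel (f x) x y
  termination_by o => o

/-- Graph relation for indices `≤ ε₀`, with `F_{ε₀}(x) = F_{ω_{x+1}}(x)`. -/
def FRelE : Option ONote → ℕ → ℕ → Prop
  | none, x, y => FRel (wtower (x + 1)) x y
  | some a, x, y => FRel a x y

/-- `OltE a b` : `a < b` among ordinals `≤ ε₀` (`none` = `ε₀`). -/
def OltE : Option ONote → Option ONote → Prop
  | some x, some y => x < y
  | some _, none => True
  | none, _ => False

/-- Finite levels of the fast-growing hierarchy. -/
def Ffin : ℕ → ℕ → ℕ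
  | 0 => fun m => m + 1
  | k + 1 => fun m => (Ffin k)^[m + 1] m

/-- `tower x α = ω_x^α` : `x`-fold exponential tower over `α`. -/
def tower : ℕ → ONote → ONote
  | 0, a => a
  | k + 1, a => ONote.oadd (tower k a) 1 0

/-- Progressiveness of a predicate on ordinal notations below ε₀. -/
def ProgO (Q : ONote → Prop) : Prop := ∀ a : ONote, (∀ b < a, Q b) → Q a

/-- Transfinite induction up to `α` for `Q`. -/
def TIO (α : ONote) (Q : ONote → Prop) : Prop := ProgO Q → ∀ β < α, Q β

open Classical in
/-- `FepsInv x` : the largest `z ≤ x` with `F_{ε₀}(z) ≤ x`, or `0` if there is none. -/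
noncomputable def FepsInv (x : ℕ) : ℕ :=
  ((Finset.range (x + 1)).filter fun z => Feps z ≤ x).sup id

end SlowCon


/-!
Writing `o[k]` for `fs o k`, two descents do all the work. First, `β >ₖ γ` lifts to
`ω^β >ₖ ω^γ` for `k ≥ 1`: at a limit `ω^β[k] = ω^(β[k])`, and at a successor `β = β' + 1`,
`ω^β[k] = ω^β'·(k+1) >ₖ ω^β'`. Second, `ω^α·(j+2) >ₖ ω^α·(j+1) + 1`, since
`(ω^α·(j+2))[k] = ω^α·(j+1) + ω^α[k]` and the tail `ω^α[k]`, being neither `0` nor `1`,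
descends to `1`. Together they give `ω_{m+1} >ₖ ω_m + 1` for `k ≥ 2` by induction on `m`
(passing through `ω^(ω_m)·(k+1) >ₖ ω^(ω_m)·2`); its lift is the first step of the chain, and the
other two steps are single instances of the descents.
-/

namespace SlowCon

open ONote

section FundamentalSequence

theorem fundamentalSequence_zero : fundamentalSequence 0 = Sum.inl none := rfl

theorem fs_of_inl_some {o a : ONote} (h : fundamentalSequence o = Sum.inl (some a)) (k : ℕ) :
    fs o k = a := by
  unfold fs; rw [h]

theorem fs_of_inr {o : ONote} {f : ℕ → ONote} (h : fundamentalSequence o = Sum.inr f) (k : ℕ) :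
    fs o k = f k := by
  unfold fs; rw [h]

theorem fs_lt {o : ONote} (h : o ≠ 0) (k : ℕ) : fs o k < o := by
  have hp := fundamentalSequence_has_prop o
  unfold fs
  rcases e : fundamentalSequence o with (_ | a) | f <;> rw [e] at hp
  · exact absurd hp h
  · rw [ONote.lt_def, hp.1]; exact Order.lt_succ _
  · exact (hp.2.1 k).2.1

theorem fs_oadd_of_ne_zero {b : ONote} (hb : b ≠ 0) (a : ONote) (m : ℕ+) (k : ℕ) :
    fs (oadd a m b) k = oadd a m (fs b k) := by
  have hp := fundamentalSequence_has_prop b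
  rcases e : fundamentalSequence b with (_ | b') | g <;> rw [e] at hp
  · exact absurd hp hb
  · rw [fs_of_inl_some e, fs_of_inl_some (by rw [fundamentalSequence, e])]
  · rw [fs_of_inr e, fs_of_inr (by rw [fundamentalSequence, e])]

theorem fs_nat_succ (j k : ℕ) : fs (oadd 0 (j + 1).succPNat 0) k = oadd 0 j.succPNat 0 := rfl

theorem fs_omega_opow_of_inl_some {a a' : ONote} (h : fundamentalSequence a = Sum.inl (some a'))
    (k : ℕ) : fs (oadd a 1 0) k = oadd a' k.succPNat 0 := by
  unfold fs; rw [fundamentalSequence, fundamentalSequence_zero, h]; rfl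

theorem fs_omega_opow_of_inr {a : ONote} {f : ℕ → ONote} (h : fundamentalSequence a = Sum.inr f)
    (k : ℕ) : fs (oadd a 1 0) k = oadd (fs a k) 1 0 := by
  unfold fs; rw [fundamentalSequence, fundamentalSequence_zero, h]; rfl

theorem fs_omega_opow_mul_succ {a : ONote} (ha : a ≠ 0) (j k : ℕ) :
    fs (oadd a (j + 1).succPNat 0) k = oadd a j.succPNat (fs (oadd a 1 0) k) := by
  have hp := fundamentalSequence_has_prop a
  rcases e : fundamentalSequence a with (_ | a') | g <;> rw [e] at hp
  · exact absurd hp ha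
  · rw [fs_omega_opow_of_inl_some e]
    unfold fs; rw [fundamentalSequence, fundamentalSequence_zero, e]; rfl
  · rw [fs_omega_opow_of_inr e, fs_of_inr e]
    unfold fs; rw [fundamentalSequence, fundamentalSequence_zero, e]; rfl

theorem fs_omega_opow_ne_zero {a : ONote} (ha : a ≠ 0) (k : ℕ) : fs (oadd a 1 0) k ≠ 0 := by
  rcases e : fundamentalSequence a with (_ | a') | g
  · exact absurd (fundamentalSequence_has_prop a) (by rw [e]; exact ha)
  · rw [fs_omega_opow_of_inl_some e]; exact (oadd_pos _ _ _).ne'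
  · rw [fs_omega_opow_of_inr e]; exact (oadd_pos _ _ _).ne'

theorem fs_ne_zero {o : ONote} (h0 : o ≠ 0) (h1 : o ≠ 1) (k : ℕ) : fs o k ≠ 0 := by
  obtain _ | ⟨a, m, b⟩ := o
  · exact absurd rfl h0
  by_cases hb : b = 0
  · subst hb
    obtain ⟨j, rfl⟩ : ∃ j : ℕ, m = j.succPNat := ⟨m.natPred, (PNat.succPNat_natPred m).symm⟩
    by_cases ha : a = 0
    · subst ha
      cases j with
      | zero => exact absurd rfl h1
      | succ j => rw [fs_nat_succ]; exact (oadd_pos _ _ _).ne'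
    · cases j with
      | zero => exact fs_omega_opow_ne_zero ha k
      | succ j => rw [fs_omega_opow_mul_succ ha]; exact (oadd_pos _ _ _).ne'
  · rw [fs_oadd_of_ne_zero hb]; exact (oadd_pos _ _ _).ne'

theorem fs_omega_opow_ne_one {a : ONote} (ha : a ≠ 0) {k : ℕ} (hk : 1 ≤ k) :
    fs (oadd a 1 0) k ≠ 1 := by
  have hp := fundamentalSequence_has_prop a
  rcases e : fundamentalSequence a with (_ | a') | g <;> rw [e] at hp
  · exact absurd hp ha
  · rw [fs_omega_opow_of_inl_some e]
    intro h
    have : k = 0 := Nat.succPNat_inj.mp (oadd.inj h).2.1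
    omega
  · rw [fs_omega_opow_of_inr e]
    intro h
    -- a limit notation is not `1`, so its fundamental sequence avoids `0`
    have ha1 : a ≠ 1 := by rintro rfl; cases e
    exact fs_ne_zero ha ha1 k (oadd.inj h).1

end FundamentalSequence

section Descent

variable {k : ℕ}

theorem stepDown_fs {o : ONote} (h : o ≠ 0) : stepDown k (fs o k) o :=
  Relation.TransGen.single ⟨h, rfl⟩

theorem stepDown.trans_fs {a o : ONote} (h : stepDown k a (fs o k)) (ho : o ≠ 0) :
    stepDown k a o :=
  Relation.TransGen.tail h ⟨ho, rfl⟩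

theorem stepDown.trans {a b c : ONote} (hab : stepDown k a b) (hbc : stepDown k b c) :
    stepDown k a c :=
  Relation.TransGen.trans hab hbc

theorem stepDown_zero (k : ℕ) (o : ONote) (h0 : o ≠ 0) : stepDown k 0 o := by
  by_cases h : fs o k = 0
  · exact h ▸ stepDown_fs h0
  · exact (stepDown_zero k (fs o k) h).trans_fs h0
termination_by o
decreasing_by exact fs_lt h0 k

theorem stepDown_one (k : ℕ) (o : ONote) (h0 : o ≠ 0) (h1 : o ≠ 1) : stepDown k 1 o := by
  by_cases h : fs o k = 1
  · exact h ▸ stepDown_fs h0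
  · exact (stepDown_one k (fs o k) (fs_ne_zero h0 h1 k) h).trans_fs h0
termination_by o
decreasing_by exact fs_lt h0 k

theorem stepDown.oadd_tail {b b' : ONote} (a : ONote) (m : ℕ+) (h : stepDown k b b') :
    stepDown k (oadd a m b) (oadd a m b') :=
  Relation.TransGen.lift (oadd a m)
    (fun _ _ hy => ⟨(oadd_pos _ _ _).ne', by rw [hy.2, fs_oadd_of_ne_zero hy.1]⟩) _ _ h

theorem stepDown_omega_opow_mul_succ (a : ONote) (j : ℕ) :
    stepDown k (oadd a j.succPNat 0) (oadd a (j + 1).succPNat 0) := by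
  by_cases ha : a = 0
  · subst ha
    exact stepDown_fs (o := oadd 0 (j + 1).succPNat 0) (oadd_pos _ _ _).ne'
  · refine stepDown.trans_fs ?_ (oadd_pos _ _ _).ne'
    rw [fs_omega_opow_mul_succ ha]
    exact stepDown.oadd_tail a _ (stepDown_zero k _ (fs_omega_opow_ne_zero ha k))

theorem stepDown_omega_opow_mul (a : ONote) {i j : ℕ} (h : i < j) :
    stepDown k (oadd a i.succPNat 0) (oadd a j.succPNat 0) := by
  induction h with
  | refl => exact stepDown_omega_opow_mul_succ a i
  | step _ ih => exact ih.trans (stepDown_omega_opow_mul_succ a _)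

theorem stepDown_omega_opow_mul_add_one {a : ONote} (ha : a ≠ 0) (hk : 1 ≤ k) (j : ℕ) :
    stepDown k (oadd a j.succPNat 1) (oadd a (j + 1).succPNat 0) := by
  refine stepDown.trans_fs ?_ (oadd_pos _ _ _).ne'
  rw [fs_omega_opow_mul_succ ha]
  exact stepDown.oadd_tail a _
    (stepDown_one k _ (fs_omega_opow_ne_zero ha k) (fs_omega_opow_ne_one ha hk))

theorem stepDown_omega_opow_mul_of_inl_some {a a' : ONote}
    (h : fundamentalSequence a = Sum.inl (some a')) {j : ℕ} (hj : j < k) :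
    stepDown k (oadd a' j.succPNat 0) (oadd a 1 0) := by
  refine stepDown.trans_fs ?_ (oadd_pos _ _ _).ne'
  rw [fs_omega_opow_of_inl_some h]
  exact stepDown_omega_opow_mul a' hj

theorem stepDown_omega_opow_fs (hk : 1 ≤ k) {a : ONote} (ha : a ≠ 0) :
    stepDown k (oadd (fs a k) 1 0) (oadd a 1 0) := by
  have hp := fundamentalSequence_has_prop a
  rcases e : fundamentalSequence a with (_ | a') | g <;> rw [e] at hp
  · exact absurd hp ha
  · rw [fs_of_inl_some e]
    exact stepDown_omega_opow_mul_of_inl_some e hk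
  · rw [← fs_omega_opow_of_inr e]
    exact stepDown_fs (oadd_pos _ _ _).ne'

theorem stepDown.omega_opow (hk : 1 ≤ k) {b a : ONote} (h : stepDown k b a) :
    stepDown k (oadd b 1 0) (oadd a 1 0) := by
  induction h with
  | single h => exact h.2 ▸ stepDown_omega_opow_fs hk h.1
  | tail _ h ih => exact ih.trans (h.2 ▸ stepDown_omega_opow_fs hk h.1)

end Descent

section Tower

theorem wtower_ne_zero : ∀ n, wtower n ≠ 0
  | 0 => (oadd_pos _ _ _).ne'
  | _ + 1 => (oadd_pos _ _ _).ne'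

theorem wtower_succ_add_one (m : ℕ) : wtower (m + 1) + 1 = oadd (wtower m) 1 1 := by
  cases m <;> rfl

theorem fundamentalSequence_wtower_add_one : ∀ m : ℕ,
    fundamentalSequence (wtower m + 1) = Sum.inl (some (wtower m))
  | 0 => rfl
  | m + 1 => by rw [wtower_succ_add_one]; rfl

theorem stepDown_wtower_add_one {k : ℕ} (hk : 2 ≤ k) :
    ∀ m, stepDown k (wtower m + 1) (wtower (m + 1))
  | 0 => by exact stepDown_omega_opow_mul_of_inl_some (a := 1) rfl hk
  | m + 1 => by
      have hk1 : 1 ≤ k := by omega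
      have hlift := (stepDown_wtower_add_one hk m).omega_opow hk1
      rw [wtower_succ_add_one]
      exact ((stepDown_omega_opow_mul_add_one (wtower_ne_zero m) hk1 0).trans
        (stepDown_omega_opow_mul_of_inl_some (fundamentalSequence_wtower_add_one m) hk)).trans
        hlift

end Tower

end SlowCon

/-- for `x ≥ 1`,
`ω_{x+3} = ω^{ω_{x+2}} >_{x+2} ω^{ω_{x+1}+1} >_{x+2} ω^{ω_{x+1}}·3 >_{x+2} ω_{x+2}·2 + 1`. -/
theorem stmt5 : ∀ x : ℕ, 1 ≤ x →
    SlowCon.stepDown (x + 2) (ONote.oadd (SlowCon.wtower (x + 1) + 1) 1 0)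
      (SlowCon.wtower (x + 3)) ∧
    SlowCon.stepDown (x + 2) (ONote.oadd (SlowCon.wtower (x + 1)) 3 0)
      (ONote.oadd (SlowCon.wtower (x + 1) + 1) 1 0) ∧
    SlowCon.stepDown (x + 2) (ONote.oadd (SlowCon.wtower (x + 1)) 2 (ONote.oadd 0 1 0))
      (ONote.oadd (SlowCon.wtower (x + 1)) 3 0) := by
  intro x hx
  refine ⟨?_, ?_, ?_⟩
  · exact (SlowCon.stepDown_wtower_add_one (by omega) (x + 1)).omega_opow (by omega)
  · exact SlowCon.stepDown_omega_opow_mul_of_inl_some (j := 2)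
      (SlowCon.fundamentalSequence_wtower_add_one (x + 1)) (by omega)
  · exact SlowCon.stepDown_omega_opow_mul_add_one (SlowCon.wtower_ne_zero (x + 1)) (by omega) 1
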